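/- arXiv:1403.6540 — 2 statements merged into one kernel-verified Lean document; each statement's English description precedes it below -/
import Mathlib

section
/- The discrete Fourier transform magnitude of the Haar wavelet satisfies: for the Haar mother wavelet at scale l and any translation p in the discrete Haar basis of C^{2^r}, |Fφ_{l,p}(ω)| = 2^{l/2−r+1} |sin(πω/2^{l+1})|² / |sin(πω/2^r)| for all integers ω with 0 < |ω| < 2^r, and in particular this value is independent of the translation parameter p. -/
open Real

/-- The discrete Haar wavelet in `ℂ^(2^r)` at scale `l` and shift `p`: it takes the
value `2^((l-r)/2)` on `[p·2^{r-l}, p·2^{r-l} + 2^{r-l-1})`, the value `-2^((l-r)/2)`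
on `[p·2^{r-l} + 2^{r-l-1}, (p+1)·2^{r-l})`, and `0` elsewhere. -/
noncomputable def haarWavelet (r l p : ℕ) (t : Fin (2 ^ r)) : ℂ :=
  if p * 2 ^ (r - l) ≤ (t : ℕ) ∧ (t : ℕ) < p * 2 ^ (r - l) + 2 ^ (r - l - 1) then
    ((2 : ℝ) ^ (((l : ℝ) - r) / 2) : ℝ)
  else if p * 2 ^ (r - l) + 2 ^ (r - l - 1) ≤ (t : ℕ) ∧ (t : ℕ) < (p + 1) * 2 ^ (r - l) then
    -((2 : ℝ) ^ (((l : ℝ) - r) / 2) : ℝ)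
  else 0

/-- The discrete Fourier transform of `x ∈ ℂ^n` at integer frequency `ω`:
`Fx(ω) = n^{-1/2} Σ_t x(t) e^{-2πi ω t / n}`. -/
noncomputable def dftAt {n : ℕ} (x : Fin n → ℂ) (ω : ℤ) : ℂ :=
  (1 / Real.sqrt n : ℝ) *
    ∑ t : Fin n, x t * Complex.exp (-2 * Real.pi * Complex.I * ω * (t : ℕ) / n)

/-! With `q = e^{-2πiω/2^r}`, `s = p·2^{r-l}` and `m = 2^{r-l-1}`, the DFT of `φ_{l,p}` is, up to
the factor `2^{(l-r)/2}/√(2^r)`, the difference of the geometric blocks `Σ_{s ≤ u < s+m} q^u` and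
`Σ_{s+m ≤ u < s+2m} q^u`, which equals `-q^s (q^m - 1)(1 + q + ⋯ + q^{m-1})`. The shift `p` only
enters through `q^s`, of modulus one, and `|e^{iθ} - 1| = 2|sin(θ/2)|` turns
`|q^m - 1|² / |q - 1|` into the quotient of sines. -/

open Finset Complex

lemma sum_Ico_pow_sub_sum_Ico_pow {R : Type*} [CommRing R] (q : R) (s m : ℕ) :
    ∑ u ∈ Ico s (s + m), q ^ u - ∑ u ∈ Ico (s + m) (s + 2 * m), q ^ u =
      -(q ^ s * ((q ^ m - 1) * ∑ i ∈ range m, q ^ i)) := by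
  rw [sum_Ico_eq_sum_range, sum_Ico_eq_sum_range, show s + m - s = m by omega,
    show s + 2 * m - (s + m) = m by omega]
  simp only [pow_add, ← mul_sum]
  ring

lemma norm_sub_one_mul_geom_sum {𝕜 : Type*} [NormedField 𝕜] (q : 𝕜) (m : ℕ) :
    ‖(q ^ m - 1) * ∑ i ∈ range m, q ^ i‖ = ‖q ^ m - 1‖ ^ 2 / ‖q - 1‖ := by
  rcases eq_or_ne q 1 with rfl | hq
  · -- both sides vanish, the right one through `x / 0 = 0`
    simp
  · rw [geom_sum_eq hq, norm_mul, norm_div]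
    ring

lemma norm_exp_neg_two_pi_I_mul_sub_one (x : ℝ) :
    ‖exp (-2 * π * I * x) - 1‖ = 2 * |Real.sin (π * x)| := by
  have h := norm_exp_I_mul_ofReal_sub_one (-2 * π * x)
  rw [show -2 * π * x / 2 = -(π * x) by ring, Real.sin_neg, norm_mul, norm_neg] at h
  simpa [mul_comm I, mul_assoc] using h

lemma dftAt_eq_sum_mul_pow {n : ℕ} (x : Fin n → ℂ) (ω : ℤ) :
    dftAt x ω = (1 / √n : ℝ) * ∑ t : Fin n, x t * exp (-2 * π * I * (ω / n : ℝ)) ^ (t : ℕ) := by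
  unfold dftAt
  congr 1
  refine sum_congr rfl fun t _ => ?_
  rw [← Complex.exp_nat_mul]
  push_cast
  ring_nf

lemma sum_range_block_mul (a : ℂ) {s m n : ℕ} (h : s + 2 * m ≤ n) (z : ℕ → ℂ) :
    ∑ u ∈ range n,
        (if s ≤ u ∧ u < s + m then a else if s + m ≤ u ∧ u < s + 2 * m then -a else 0) * z u =
      a * (∑ u ∈ Ico s (s + m), z u - ∑ u ∈ Ico (s + m) (s + 2 * m), z u) := by
  have hblock : ∀ u, (if s ≤ u ∧ u < s + m then a
      else if s + m ≤ u ∧ u < s + 2 * m then -a else 0) * z u =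
      a * ((if u ∈ Ico s (s + m) then z u else 0) -
        if u ∈ Ico (s + m) (s + 2 * m) then z u else 0) := by
    intro u
    simp only [mem_Ico]
    split_ifs <;> first | (exfalso; omega) | ring
  simp only [hblock, ← mul_sum, sum_sub_distrib, sum_ite_mem]
  rw [inter_eq_right.mpr, inter_eq_right.mpr] <;>
    · intro u
      simp only [mem_Ico, mem_range]
      omega

lemma sum_haarWavelet_mul {r l p : ℕ} (hl : l < r) (hp : p < 2 ^ l) (z : ℕ → ℂ) :
    ∑ t : Fin (2 ^ r), haarWavelet r l p t * z t =
      (((2 : ℝ) ^ (((l : ℝ) - r) / 2) : ℝ) : ℂ) *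
        (∑ u ∈ Ico (p * 2 ^ (r - l)) (p * 2 ^ (r - l) + 2 ^ (r - l - 1)), z u -
          ∑ u ∈ Ico (p * 2 ^ (r - l) + 2 ^ (r - l - 1)) (p * 2 ^ (r - l) + 2 * 2 ^ (r - l - 1)),
            z u) := by
  have hend : (p + 1) * 2 ^ (r - l) = p * 2 ^ (r - l) + 2 * 2 ^ (r - l - 1) := by
    rw [add_one_mul, ← pow_succ', Nat.sub_add_cancel (Nat.sub_pos_of_lt hl)]
  have hfit : p * 2 ^ (r - l) + 2 * 2 ^ (r - l - 1) ≤ 2 ^ r := calc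
    _ = (p + 1) * 2 ^ (r - l) := hend.symm
    _ ≤ 2 ^ l * 2 ^ (r - l) := Nat.mul_le_mul_right _ hp
    _ = 2 ^ r := by rw [← pow_add, Nat.add_sub_cancel' hl.le]
  simp only [haarWavelet, hend]
  rw [← sum_range_block_mul _ hfit z, sum_range]

lemma two_rpow_div_sqrt_two_pow_mul_two (l r : ℕ) :
    (2 : ℝ) ^ (((l : ℝ) - r) / 2) / √(2 ^ r) * 2 = (2 : ℝ) ^ ((l : ℝ) / 2 - r + 1) := by
  have hsqrt : √((2 : ℝ) ^ r) = (2 : ℝ) ^ ((r : ℝ) / 2) := by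
    rw [Real.sqrt_eq_rpow, ← Real.rpow_natCast, ← Real.rpow_mul zero_le_two, mul_one_div]
  rw [hsqrt, div_eq_mul_inv, ← Real.rpow_neg zero_le_two,
    show (l : ℝ) / 2 - r + 1 = (l - r) / 2 + -(r / 2) + 1 by ring, Real.rpow_add two_pos,
    Real.rpow_add two_pos, Real.rpow_one]

theorem abs_dft_haarWavelet_general (r l p : ℕ) (hl : l < r) (hp : p < 2 ^ l)
    (ω : ℤ) :
    ‖dftAt (haarWavelet r l p) ω‖ =
      (2 : ℝ) ^ ((l : ℝ) / 2 - r + 1) *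
        |Real.sin (Real.pi * ω / 2 ^ (l + 1))| ^ 2 / |Real.sin (Real.pi * ω / 2 ^ r)| := by
  set q := exp (-2 * π * I * (ω / (2 ^ r : ℕ) : ℝ))
  have hq : ‖q‖ = 1 := by
    rw [Complex.norm_exp, mul_re, ofReal_im]
    simp
  have hqm : q ^ 2 ^ (r - l - 1) = exp (-2 * π * I * (ω / 2 ^ (l + 1) : ℝ)) := by
    have hsplit : (2 : ℂ) ^ r = 2 ^ (r - l - 1) * 2 ^ (l + 1) := by
      rw [← pow_add, Nat.sub_sub, Nat.sub_add_cancel (by omega)]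
    rw [← Complex.exp_nat_mul]
    push_cast
    rw [hsplit]
    field_simp
  rw [dftAt_eq_sum_mul_pow, sum_haarWavelet_mul hl hp, sum_Ico_pow_sub_sum_Ico_pow, norm_mul,
    norm_mul, norm_neg, norm_mul, norm_pow, hq, one_pow, one_mul, norm_sub_one_mul_geom_sum, hqm,
    norm_exp_neg_two_pi_I_mul_sub_one, norm_exp_neg_two_pi_I_mul_sub_one, norm_real, norm_real,
    Real.norm_of_nonneg (by positivity), Real.norm_of_nonneg (by positivity),
    ← two_rpow_div_sqrt_two_pow_mul_two]
  push_cast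
  simp only [mul_div_assoc]
  ring

/-- for all integer frequencies `ω` with `0 < |ω| < 2^r`, the magnitude of
the DFT of the Haar wavelet at scale `l` and shift `p` equals
`2^(l/2 - r + 1) |sin(πω/2^{l+1})|² / |sin(πω/2^r)|`; in particular it does not depend
on the shift `p`. -/
theorem abs_dft_haarWavelet (r l p : ℕ) (hl : l < r) (hp : p < 2 ^ l)
    (ω : ℤ) (hω0 : ω ≠ 0) (hω : |ω| < 2 ^ r) :
    ‖dftAt (haarWavelet r l p) ω‖ =
      (2 : ℝ) ^ ((l : ℝ) / 2 - r + 1) *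
        |Real.sin (Real.pi * ω / 2 ^ (l + 1))| ^ 2 / |Real.sin (Real.pi * ω / 2 ^ r)| :=
  abs_dft_haarWavelet_general r l p hl hp ω
end

section
/- Sharpness in the ratio constant: for every a ∈ ℕ and every function f with f(λ) = o(√λ) as λ → ∞, there exists a two-level sparsity pattern (k,M) with ratio constant λ and a matrix A whose RIP-in-levels constant satisfies δ_{ak} ≤ 1/|f(λ)|, yet some x ∈ Σ_{k,M} is not the unique minimizer of min ‖z‖₁ subject to Az = Ax. -/
/-- `c` is `(k, M)`-sparse: at most `k j` nonzero entries in the `j`-th level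
`{M_{j}, ..., M_{j+1} - 1}` (0-indexed). -/
def SparseInLevels {n : ℕ} (r : ℕ) (M : ℕ → ℕ) (k : ℕ → ℕ) (c : Fin n → ℂ) : Prop :=
  ∀ j < r, (Finset.univ.filter fun i : Fin n =>
    c i ≠ 0 ∧ M j ≤ (i : ℕ) ∧ (i : ℕ) < M (j + 1)).card ≤ k j

/-! Take two levels of size `N` with `k = (1, N)`, so `λ = N`, and let `e₀, e₁` be the indicators
of the two levels (`firstHalf N`, `secondHalf N`). The matrix `A = I + N⁻¹ (e₁ - e₀) e₀ᵀ` sends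
both `e₀` and `e₁` to `e₁`, and `‖e₀‖₁ = ‖e₁‖₁`, so `ℓ¹` recovery of the `(k, M)`-sparse vector
`e₁` fails. On the other hand `‖Av‖² = ‖v‖² + 2 Re ⟨S₀, S₁⟩ / N`, where `Sⱼ` is the sum of the
entries of `v` in level `j`. If `v` has at most `a` nonzero entries in level `0`, Cauchy–Schwarz
gives `|S₀|² ≤ a ‖v₀‖²` and `|S₁|² ≤ N ‖v₁‖²`, hence `δ_{ak} ≤ √(a / N)`; and
`√(a / N) |f N| ≤ 1` for large `N` because `f N = o(√N)`. -/

open Finset Matrix Filter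
open scoped RealInnerProductSpace Topology

lemma sq_norm_sum_le_card_support_mul {ι E : Type*} [Fintype ι] [SeminormedAddCommGroup E]
    [DecidableEq E] (u : ι → E) :
    ‖∑ i, u i‖ ^ 2 ≤ #{i | u i ≠ 0} * ∑ i, ‖u i‖ ^ 2 := by
  set S := ({i | u i ≠ 0} : Finset ι)
  calc ‖∑ i, u i‖ ^ 2 = ‖∑ i ∈ S, u i‖ ^ 2 := by rw [sum_filter_ne_zero]
    _ ≤ (∑ i ∈ S, ‖u i‖) ^ 2 := by gcongr; exact norm_sum_le _ _
    _ ≤ #S * ∑ i ∈ S, ‖u i‖ ^ 2 := sq_sum_le_card_mul_sum_sq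
    _ ≤ #S * ∑ i, ‖u i‖ ^ 2 := by
      gcongr
      exact subset_univ _

lemma sum_norm_add_sq {ι F : Type*} [SeminormedAddCommGroup F] [InnerProductSpace ℝ F]
    (s : Finset ι) (u : ι → F) (c : F) :
    ∑ i ∈ s, ‖u i + c‖ ^ 2 = ∑ i ∈ s, ‖u i‖ ^ 2 + 2 * ⟪∑ i ∈ s, u i, c⟫ + #s * ‖c‖ ^ 2 := by
  simp only [norm_add_sq_real, sum_add_distrib, sum_inner, mul_sum, sum_const, nsmul_eq_mul]

lemma two_mul_le_sqrt_mul_sqrt_mul_add {s t a b p q : ℝ} (ha : 0 ≤ a) (hb : 0 ≤ b)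
    (hp : 0 ≤ p) (hq : 0 ≤ q) (hs : s ^ 2 ≤ a * p) (ht : t ^ 2 ≤ b * q) :
    2 * s * t ≤ √a * √b * (p + q) := by
  have hs' : |s| ≤ √a * √p := by rw [← Real.sqrt_mul ha]; exact Real.abs_le_sqrt hs
  have ht' : |t| ≤ √b * √q := by rw [← Real.sqrt_mul hb]; exact Real.abs_le_sqrt ht
  have amgm : 2 * √p * √q ≤ p + q := by
    simpa [Real.sq_sqrt hp, Real.sq_sqrt hq] using two_mul_le_add_sq √p √q
  calc 2 * s * t ≤ 2 * |s| * |t| := by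
        rw [mul_assoc, mul_assoc, ← abs_mul]; gcongr; exact le_abs_self _
    _ ≤ 2 * (√a * √p) * (√b * √q) := by gcongr
    _ = √a * √b * (2 * √p * √q) := by ring
    _ ≤ √a * √b * (p + q) := by gcongr

lemma card_filter_mem_Ico_le {n : ℕ} (p : Fin n → Prop) [DecidablePred p] (a b : ℕ) :
    #{i | p i ∧ a ≤ (i : ℕ) ∧ (i : ℕ) < b} ≤ b - a := by
  calc #{i | p i ∧ a ≤ (i : ℕ) ∧ (i : ℕ) < b} ≤ #(Ico a b) := by
        refine card_le_card_of_injOn Fin.val (fun i hi => ?_) Fin.val_injective.injOn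
        simp only [coe_filter, mem_univ, true_and] at hi
        simpa using hi.2
    _ = b - a := Nat.card_Ico a b

lemma eventually_div_sqrt_mul_abs_le_one {f : ℝ → ℝ}
    (hf : Tendsto (fun t => f t / √t) atTop (𝓝 0)) (C : ℝ) :
    ∀ᶠ t in atTop, C / √t * |f t| ≤ 1 := by
  have h : Tendsto (fun t => |C * (f t / √t)|) atTop (𝓝 0) := by
    simpa using (hf.const_mul C).abs
  filter_upwards [h.eventually_lt_const one_pos] with t ht
  calc C / √t * |f t| ≤ |C * (f t / √t)| := by
        rw [abs_mul, abs_div, abs_of_nonneg (Real.sqrt_nonneg t), mul_div_assoc', div_mul_eq_mul_div]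
        gcongr
        exact le_abs_self C
    _ ≤ 1 := ht.le

namespace RatioSharpness

variable {N : ℕ}

def firstHalf (N : ℕ) : Fin (N + N) → ℂ := fun i => if (i : ℕ) < N then 1 else 0

def secondHalf (N : ℕ) : Fin (N + N) → ℂ := fun i => if (i : ℕ) < N then 0 else 1

noncomputable def ratioMatrix (N : ℕ) : Matrix (Fin (N + N)) (Fin (N + N)) ℂ :=
  1 + (N : ℂ)⁻¹ • vecMulVec (secondHalf N - firstHalf N) (firstHalf N)

lemma firstHalf_dotProduct (v : Fin (N + N) → ℂ) :
    firstHalf N ⬝ᵥ v = ∑ i : Fin N, v (Fin.castAdd N i) := by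
  simp [dotProduct, Fin.sum_univ_add, firstHalf]

lemma ratioMatrix_mulVec (v : Fin (N + N) → ℂ) :
    ratioMatrix N *ᵥ v = v + ((N : ℂ)⁻¹ * (firstHalf N ⬝ᵥ v)) • (secondHalf N - firstHalf N) := by
  simp [ratioMatrix, add_mulVec, smul_mulVec, vecMulVec_mulVec, smul_smul]

lemma ratioMatrix_mulVec_castAdd (v : Fin (N + N) → ℂ) (i : Fin N) :
    (ratioMatrix N *ᵥ v) (Fin.castAdd N i)
      = v (Fin.castAdd N i) - (N : ℂ)⁻¹ * ∑ j : Fin N, v (Fin.castAdd N j) := by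
  simp [ratioMatrix_mulVec, firstHalf_dotProduct, firstHalf, secondHalf, sub_eq_add_neg]

lemma ratioMatrix_mulVec_natAdd (v : Fin (N + N) → ℂ) (i : Fin N) :
    (ratioMatrix N *ᵥ v) (Fin.natAdd N i)
      = v (Fin.natAdd N i) + (N : ℂ)⁻¹ * ∑ j : Fin N, v (Fin.castAdd N j) := by
  simp [ratioMatrix_mulVec, firstHalf_dotProduct, firstHalf, secondHalf]

lemma sum_norm_sq_ratioMatrix_mulVec (v : Fin (N + N) → ℂ) :
    ∑ r, ‖(ratioMatrix N *ᵥ v) r‖ ^ 2 = ∑ r, ‖v r‖ ^ 2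
      + 2 * ⟪∑ i : Fin N, v (Fin.castAdd N i), ∑ i : Fin N, v (Fin.natAdd N i)⟫ / N := by
  have hc (z : ℂ) : (N : ℂ)⁻¹ * z = (N : ℝ)⁻¹ • z := by simp [Complex.real_smul]
  simp only [Fin.sum_univ_add, ratioMatrix_mulVec_castAdd, ratioMatrix_mulVec_natAdd,
    sub_eq_add_neg, ← neg_smul, hc, sum_norm_add_sq, card_univ, Fintype.card_fin,
    real_inner_smul_right, real_inner_self_eq_norm_sq, norm_smul, norm_neg,
    norm_inv, RCLike.norm_natCast]
  rw [real_inner_comm]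
  rcases eq_or_ne (N : ℝ) 0 with hN | hN
  · simp [hN]
  · field_simp
    ring

lemma abs_sum_norm_sq_ratioMatrix_mulVec_sub_le {s : ℕ} (v : Fin (N + N) → ℂ)
    (hv : #{i | v (Fin.castAdd N i) ≠ 0} ≤ s) :
    |∑ r, ‖(ratioMatrix N *ᵥ v) r‖ ^ 2 - ∑ r, ‖v r‖ ^ 2| ≤ √s / √N * ∑ r, ‖v r‖ ^ 2 := by
  rw [sum_norm_sq_ratioMatrix_mulVec, add_sub_cancel_left, Fin.sum_univ_add]
  set S₀ := ∑ i : Fin N, v (Fin.castAdd N i)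
  set S₁ := ∑ i : Fin N, v (Fin.natAdd N i)
  set P₀ := ∑ i : Fin N, ‖v (Fin.castAdd N i)‖ ^ 2
  set P₁ := ∑ i : Fin N, ‖v (Fin.natAdd N i)‖ ^ 2
  have hS₀ : ‖S₀‖ ^ 2 ≤ s * P₀ :=
    (sq_norm_sum_le_card_support_mul _).trans (by gcongr)
  have hS₁ : ‖S₁‖ ^ 2 ≤ N * P₁ :=
    (sq_norm_sum_le_card_support_mul _).trans (by
      gcongr
      exact (card_filter_le _ _).trans (card_univ.trans (Fintype.card_fin N)).le)
  calc |2 * ⟪S₀, S₁⟫ / N| ≤ 2 * ‖S₀‖ * ‖S₁‖ / N := by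
        rw [abs_div, abs_mul, Nat.abs_cast, abs_two, mul_assoc]
        gcongr
        exact abs_real_inner_le_norm S₀ S₁
    _ ≤ √s * √N * (P₀ + P₁) / N := by
        gcongr ?_ / _
        exact two_mul_le_sqrt_mul_sqrt_mul_add (by positivity) (by positivity)
          (by positivity) (by positivity) hS₀ hS₁
    _ = √s / √N * (P₀ + P₁) := by
        rw [mul_right_comm, mul_div_assoc, Real.sqrt_div_self']
        ring

lemma card_support_castAdd_le {k : ℕ → ℕ} {v : Fin (N + N) → ℂ}
    (hv : SparseInLevels 2 (· * N) k v) : #{i | v (Fin.castAdd N i) ≠ 0} ≤ k 0 := by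
  refine le_trans ?_ (hv 0 two_pos)
  refine card_le_card_of_injOn (Fin.castAdd N) (fun i hi => ?_) (Fin.castAdd_injective N N).injOn
  simp only [coe_filter, mem_univ, true_and] at hi ⊢
  simpa using hi

lemma sparseInLevels_secondHalf : SparseInLevels 2 (· * N) (N ^ ·) (secondHalf N) := by
  intro j hj
  interval_cases j
  · refine (card_eq_zero.mpr (filter_eq_empty_iff.mpr fun i _ => ?_)).trans_le zero_le_one
    simp [secondHalf]
  · simpa [two_mul] using card_filter_mem_Ico_le (fun i => secondHalf N i ≠ 0) N (N + N)

lemma ratioMatrix_mulVec_firstHalf (hN : N ≠ 0) : ratioMatrix N *ᵥ firstHalf N = secondHalf N := by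
  have : firstHalf N ⬝ᵥ firstHalf N = N := by simp [firstHalf_dotProduct, firstHalf]
  simp [ratioMatrix_mulVec, this, hN]

lemma ratioMatrix_mulVec_secondHalf : ratioMatrix N *ᵥ secondHalf N = secondHalf N := by
  have : firstHalf N ⬝ᵥ secondHalf N = 0 := by simp [firstHalf_dotProduct, secondHalf]
  simp [ratioMatrix_mulVec, this]

lemma firstHalf_ne_secondHalf (hN : N ≠ 0) : firstHalf N ≠ secondHalf N := by
  intro h
  simpa [firstHalf, secondHalf, Nat.pos_of_ne_zero hN] using congrFun h ⟨0, by omega⟩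

lemma sum_norm_firstHalf_eq_sum_norm_secondHalf :
    ∑ i, ‖firstHalf N i‖ = ∑ i, ‖secondHalf N i‖ := by
  simp [firstHalf, secondHalf, Fin.sum_univ_add]

end RatioSharpness

open RatioSharpness in
/-- sharpness in the ratio constant: for every `a ∈ ℕ` and every `f`
with `f(λ) = o(√λ)`, there exist a two-level sparsity pattern with ratio constant `λ`
and a matrix `A` whose RIP-in-levels constant for `(ak, M)` satisfies
`δ_{ak} ≤ 1/|f(λ)|` (equivalently `δ_{ak}·|f(λ)| ≤ 1`), yet some `(k, M)`-sparse `x` is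
not the unique minimizer of `min ‖z‖₁ s.t. Az = Ax`. -/
theorem ripInLevels_sharp_in_ratio (a : ℕ)
    (f : ℝ → ℝ)
    (hf : Filter.Tendsto (fun t => f t / Real.sqrt t) Filter.atTop (nhds 0)) :
    ∃ (m n : ℕ) (M : ℕ → ℕ) (k : ℕ → ℕ) (A : Matrix (Fin m) (Fin n) ℂ)
      (x : Fin n → ℂ) (lam δ : ℝ),
      M 0 = 0 ∧ M 2 = n ∧ Monotone M ∧
      (∀ j < 2, 1 ≤ k j ∧ k j ≤ M (j + 1) - M j) ∧
      -- ratio constant of the two-level pattern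
      lam = max ((k 0 : ℝ) / (k 1 : ℝ)) ((k 1 : ℝ) / (k 0 : ℝ)) ∧
      -- A has RIP-in-levels constant δ for the pattern (ak, M), with δ ≤ 1/|f(λ)|
      0 ≤ δ ∧
      (∀ v : Fin n → ℂ, SparseInLevels 2 M (fun j => a * k j) v →
        (1 - δ) * ∑ i, ‖v i‖ ^ 2 ≤ ∑ i, ‖A.mulVec v i‖ ^ 2 ∧
        ∑ i, ‖A.mulVec v i‖ ^ 2 ≤ (1 + δ) * ∑ i, ‖v i‖ ^ 2) ∧
      δ * |f lam| ≤ 1 ∧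
      -- yet ℓ¹ recovery of some (k, M)-sparse x fails
      SparseInLevels 2 M k x ∧
      (∃ z : Fin n → ℂ, z ≠ x ∧ A.mulVec z = A.mulVec x ∧
        ∑ i, ‖z i‖ ≤ ∑ i, ‖x i‖) := by
  obtain ⟨N, hfN, hN⟩ := ((tendsto_natCast_atTop_atTop.eventually
    (eventually_div_sqrt_mul_abs_le_one hf √a)).and (eventually_ne_atTop 0)).exists
  refine ⟨N + N, N + N, (· * N), (N ^ ·), ratioMatrix N, secondHalf N, N, √a / √N,
    by simp, by ring, fun i j hij => Nat.mul_le_mul_right N hij, ?_, ?_, by positivity, ?_, hfN,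
    sparseInLevels_secondHalf, firstHalf N, firstHalf_ne_secondHalf hN,
    (ratioMatrix_mulVec_firstHalf hN).trans ratioMatrix_mulVec_secondHalf.symm,
    sum_norm_firstHalf_eq_sum_norm_secondHalf.le⟩
  · intro j hj
    interval_cases j <;> simp <;> omega
  · have h1 : (1 : ℝ) ≤ N := Nat.one_le_cast.mpr (Nat.pos_of_ne_zero hN)
    simp only [pow_zero, pow_one, Nat.cast_one, div_one]
    exact (max_eq_right ((div_le_one (by positivity)).mpr h1 |>.trans h1)).symm
  · intro v hv
    have hrip := abs_le.mp (abs_sum_norm_sq_ratioMatrix_mulVec_sub_le (s := a) v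
      ((card_support_castAdd_le hv).trans (by simp)))
    constructor <;> linarith
end
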